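/- arXiv:0808.1836 — 5 statements merged into one kernel-verified Lean document; each statement's English description precedes it below -/
import Mathlib

section
/- Let Σ be a fan in ℝ^n with convex support of dimension n, let P = {ρ_1,…,ρ_k} be a primitive collection for Σ, and let ρ_1 + ⋯ + ρ_k = Σ_{ρ∈S} b_ρ ρ be a primitive relation for P (so S is a linearly independent subset of σ(1) for the minimal cone σ of Σ containing ρ_1 + ⋯ + ρ_k, and b_ρ > 0 for all ρ ∈ S). Then b_ρ < 1 for every ρ ∈ P ∩ S. Consequently, the set of rays ρ at which the vector a_P ∈ ℝ^{Σ(1)} (defined by (a_P)_ρ = 1 for ρ ∈ P∖S, (a_P)_ρ = 1 − b_ρ for ρ ∈ P∩S, (a_P)_ρ = −b_ρ for ρ ∈ S∖P, and 0 otherwise) has a strictly positive entry is exactly P. -/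
open Set

noncomputable section

/-- Ambient vector space `ℝ^n`. -/
abbrev V (n : ℕ) := Fin n → ℝ

/-- The cone generated by a set of vectors: all finite nonnegative combinations. -/
def coneGen {n : ℕ} (G : Set (V n)) : Set (V n) :=
  { x | ∃ (t : Finset (V n)) (c : V n → ℝ),
      ↑t ⊆ G ∧ (∀ g ∈ t, 0 ≤ c g) ∧ x = ∑ g ∈ t, c g • g }

/-- A vector with integer coordinates. -/
def IsIntegralVec {n : ℕ} (v : V n) : Prop := ∀ i, ∃ z : ℤ, v i = (z : ℝ)

/-- A rational polyhedral cone: generated by finitely many integral vectors. -/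
def IsRatPolyhedralCone {n : ℕ} (σ : Set (V n)) : Prop :=
  ∃ G : Finset (V n), (∀ g ∈ G, IsIntegralVec g) ∧ σ = coneGen ↑G

/-- A strongly convex cone contains no line. -/
def StronglyConvex {n : ℕ} (σ : Set (V n)) : Prop :=
  ∀ x ∈ σ, -x ∈ σ → x = 0

/-- `τ` is a face of the cone `σ`: cut out by a supporting linear functional. -/
def IsFaceOf {n : ℕ} (τ σ : Set (V n)) : Prop :=
  ∃ m : Module.Dual ℝ (V n), (∀ x ∈ σ, 0 ≤ m x) ∧ τ = σ ∩ {x | m x = 0}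

/-- A fan in `ℝ^n`: a finite collection of strongly convex rational polyhedral
cones, closed under taking faces, such that the intersection of any two cones
is a face of each. -/
structure Fan (n : ℕ) where
  cones : Set (Set (V n))
  finite : cones.Finite
  poly : ∀ σ ∈ cones, IsRatPolyhedralCone σ ∧ StronglyConvex σ
  face_mem : ∀ σ ∈ cones, ∀ τ : Set (V n), IsFaceOf τ σ → τ ∈ cones
  inter_face : ∀ σ ∈ cones, ∀ σ' ∈ cones,
    IsFaceOf (σ ∩ σ') σ ∧ IsFaceOf (σ ∩ σ') σ'

/-- The support of a fan: the union of its cones. -/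
def Fan.support {n : ℕ} (F : Fan n) : Set (V n) := ⋃ σ ∈ F.cones, σ

/-- The dimension of a cone: the dimension of its linear span. -/
def dimCone {n : ℕ} (σ : Set (V n)) : ℕ :=
  Module.finrank ℝ (Submodule.span ℝ σ)

/-- `Σ(k)`: the set of `k`-dimensional cones of the fan. -/
def Fan.conesDim {n : ℕ} (F : Fan n) (k : ℕ) : Set (Set (V n)) :=
  {σ | σ ∈ F.cones ∧ dimCone σ = k}

/-- The ray generated by a vector. -/
def ray {n : ℕ} (v : V n) : Set (V n) := {x | ∃ t : ℝ, 0 ≤ t ∧ x = t • v}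

/-- A primitive lattice vector: integral, nonzero, and not a nontrivial
positive integer multiple of an integral vector. -/
def IsPrimitiveVec {n : ℕ} (v : V n) : Prop :=
  IsIntegralVec v ∧ v ≠ 0 ∧
    ∀ (w : V n) (k : ℕ), IsIntegralVec w → v = (k : ℝ) • w → k = 1

/-- `Σ(1)`, identified with the set of primitive generators of the rays of the fan. -/
def Fan.rayGens {n : ℕ} (F : Fan n) : Set (V n) :=
  { v | IsPrimitiveVec v ∧ ray v ∈ F.cones }

/-- `σ(1)`: the primitive generators of the 1-dimensional faces of the cone `σ`. -/
def coneRays {n : ℕ} (σ : Set (V n)) : Set (V n) :=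
  { v | IsPrimitiveVec v ∧ IsFaceOf (ray v) σ }

/-- `φ ∈ PL(Σ)`: `φ` is linear on each cone of the fan. -/
def IsPL {n : ℕ} (F : Fan n) (φ : V n → ℝ) : Prop :=
  ∀ σ ∈ F.cones, ∃ m : Module.Dual ℝ (V n), ∀ x ∈ σ, φ x = m x

/-- Convexity of a piecewise-linear function on the support of the fan. -/
def IsConvexPLF {n : ℕ} (F : Fan n) (φ : V n → ℝ) : Prop :=
  ∀ u ∈ F.support, ∀ v ∈ F.support, φ (u + v) ≤ φ u + φ v

/-- Strict convexity: strict inequality whenever `u, v` lie in no common cone. -/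
def IsStrictlyConvexPLF {n : ℕ} (F : Fan n) (φ : V n → ℝ) : Prop :=
  ∀ u ∈ F.support, ∀ v ∈ F.support,
    (¬ ∃ σ ∈ F.cones, u ∈ σ ∧ v ∈ σ) → φ (u + v) < φ u + φ v

/-- A fan is quasi-projective if it carries a strictly convex piecewise-linear function. -/
def Fan.QuasiProjective {n : ℕ} (F : Fan n) : Prop :=
  ∃ φ : V n → ℝ, IsPL F φ ∧ IsStrictlyConvexPLF F φ

/-- A fan is simplicial if each of its cones is generated by linearly independent vectors. -/
def Fan.Simplicial {n : ℕ} (F : Fan n) : Prop :=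
  ∀ σ ∈ F.cones, ∃ G : Finset (V n),
    LinearIndependent ℝ (fun g : {x // x ∈ G} => (g : V n)) ∧ σ = coneGen ↑G

/-- `F'` refines `F`: same support, and every cone of `F'` lies in a cone of `F`. -/
def Fan.Refines {n : ℕ} (F' F : Fan n) : Prop :=
  F'.support = F.support ∧ ∀ σ' ∈ F'.cones, ∃ σ ∈ F.cones, σ' ⊆ σ

/-- A primitive collection: a set of rays of the fan contained in no single cone
of the fan, every proper subset of which is contained in some cone. -/
def IsPrimColl {n : ℕ} (F : Fan n) (P : Finset (V n)) : Prop :=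
  ↑P ⊆ F.rayGens ∧ (∀ σ ∈ F.cones, ¬ (↑P ⊆ σ)) ∧
    ∀ Q : Finset (V n), Q ⊂ P → ∃ σ ∈ F.cones, ↑Q ⊆ σ

/-- The subspace `PL(Σ)` of piecewise-linear functions, as a submodule of functions. -/
def PLsub {n : ℕ} (F : Fan n) : Submodule ℝ (V n → ℝ) where
  carrier := {φ | IsPL F φ}
  add_mem' := by
    intro φ ψ hφ hψ σ hσ
    obtain ⟨m1, h1⟩ := hφ σ hσ
    obtain ⟨m2, h2⟩ := hψ σ hσ
    exact ⟨m1 + m2, fun x hx => by simp [Pi.add_apply, h1 x hx, h2 x hx]⟩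
  zero_mem' := by
    intro σ hσ
    exact ⟨0, fun x hx => rfl⟩
  smul_mem' := by
    intro c φ hφ σ hσ
    obtain ⟨m, h⟩ := hφ σ hσ
    exact ⟨c • m, fun x hx => by simp [Pi.smul_apply, h x hx]⟩

/-- Evaluation at a point, as an element of `PL(Σ)*`. -/
def evalPL {n : ℕ} (F : Fan n) (x : V n) : Module.Dual ℝ (PLsub F) where
  toFun φ := (φ : V n → ℝ) x
  map_add' φ ψ := rfl
  map_smul' c φ := rfl

/-- The cone `CPL(Σ)` of convex piecewise-linear functions, inside `PL(Σ)`. -/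
def CPLs {n : ℕ} (F : Fan n) : Set (PLsub F) :=
  {φ | IsConvexPLF F (φ : V n → ℝ)}

/-- The Mori cone `NE(Σ) ⊆ PL(Σ)*`: the dual cone of `CPL(Σ)`. -/
def NE {n : ℕ} (F : Fan n) : Set (Module.Dual ℝ (PLsub F)) :=
  {ℓ | ∀ φ ∈ CPLs F, 0 ≤ ℓ φ}

/-- An interior wall: an `(n-1)`-dimensional cone of the fan not contained in the
topological boundary of the support. -/
def Fan.IsInteriorWall {n : ℕ} (F : Fan n) (τ : Set (V n)) : Prop :=
  τ ∈ F.cones ∧ dimCone τ = n - 1 ∧ ¬ (τ ⊆ frontier F.support)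

/-- The data of a wall relation for an interior wall `τ = σ ∩ σ'`:
`n-1` linearly independent rays of `τ`, rays `ρn ∈ σ(1) ∖ τ(1)` and
`ρn' ∈ σ'(1) ∖ τ(1)`, and coefficients with `aₙ > 0` and
`a₁ρ₁ + ⋯ + aₙρₙ + ρₙ₊₁ = 0`. -/
structure WallRelData (n : ℕ) (τ σ σ' : Set (V n)) where
  ρ : Fin (n - 1) → V n
  ρn : V n
  ρn' : V n
  a : Fin (n - 1) → ℝ
  an : ℝ
  ρ_mem : ∀ i, ρ i ∈ coneRays τ
  ρ_indep : LinearIndependent ℝ ρ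
  ρn_mem : ρn ∈ coneRays σ \ coneRays τ
  ρn'_mem : ρn' ∈ coneRays σ' \ coneRays τ
  an_pos : 0 < an
  rel : (∑ i, a i • ρ i) + an • ρn + ρn' = 0

/-- The functional `l_τ` on functions associated to a wall relation. -/
def WallRelData.funct {n : ℕ} {τ σ σ' : Set (V n)} (w : WallRelData n τ σ σ')
    (φ : V n → ℝ) : ℝ :=
  (∑ i, w.a i * φ (w.ρ i)) + w.an * φ w.ρn + φ w.ρn'

/-- The functional `l_τ ∈ PL(Σ)*` associated to a wall relation. -/
def WallRelData.dual {n : ℕ} (F : Fan n) {τ σ σ' : Set (V n)}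
    (w : WallRelData n τ σ σ') : Module.Dual ℝ (PLsub F) :=
  (∑ i, w.a i • evalPL F (w.ρ i)) + w.an • evalPL F w.ρn + evalPL F w.ρn'

/-- `ℓ ∈ PL(Σ)*` is (a choice of) the wall-relation functional of some interior wall. -/
def IsWallFunctional {n : ℕ} (F : Fan n) (ℓ : Module.Dual ℝ (PLsub F)) : Prop :=
  ∃ (τ σ σ' : Set (V n)) (w : WallRelData n τ σ σ'),
    F.IsInteriorWall τ ∧ σ ∈ F.conesDim n ∧ σ' ∈ F.conesDim n ∧
      τ = σ ∩ σ' ∧ ℓ = w.dual F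

/-- `σ` is the minimal cone of the fan containing `x`. -/
def IsMinimalConeContaining {n : ℕ} (F : Fan n) (x : V n) (σ : Set (V n)) : Prop :=
  σ ∈ F.cones ∧ x ∈ σ ∧ ∀ σ' ∈ F.cones, x ∈ σ' → σ ⊆ σ'

/-- A primitive relation for the primitive collection `P`: a linearly independent
subset `S ⊆ σ(1)` of the minimal cone `σ` containing `∑_{ρ∈P} ρ` together with
positive coefficients `b` with `∑_{ρ∈P} ρ = ∑_{ρ∈S} b_ρ ρ`. -/
def IsPrimRel {n : ℕ} (F : Fan n) (P S : Finset (V n)) (b : V n → ℝ) : Prop :=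
  ∃ σ : Set (V n), IsMinimalConeContaining F (∑ ρ ∈ P, ρ) σ ∧
    ↑S ⊆ coneRays σ ∧
    LinearIndependent ℝ (fun s : {x // x ∈ S} => (s : V n)) ∧
    (∀ ρ ∈ S, 0 < b ρ) ∧ (∑ ρ ∈ P, ρ) = ∑ ρ ∈ S, b ρ • ρ

open scoped Classical in
/-- The vector `a_P ∈ ℝ^{Σ(1)}` associated to a primitive relation. -/
def primVec {n : ℕ} (P S : Finset (V n)) (b : V n → ℝ) : V n → ℝ := fun ρ =>
  if ρ ∈ P then (if ρ ∈ S then 1 - b ρ else 1)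
  else (if ρ ∈ S then -b ρ else 0)

/-- The functional `l_P ∈ PL(Σ)*` of a primitive collection:
`φ ↦ ∑_{ρ∈P} φ(ρ) − φ(∑_{ρ∈P} ρ)`. -/
def primDual {n : ℕ} (F : Fan n) (P : Finset (V n)) : Module.Dual ℝ (PLsub F) :=
  (∑ ρ ∈ P, evalPL F ρ) - evalPL F (∑ ρ ∈ P, ρ)


/-!
If `b ρ₀ ≥ 1` for some `ρ₀ ∈ P ∩ S`, then `∑_{ρ ∈ P ∖ ρ₀} ρ = (b ρ₀ - 1) ρ₀ + ∑_{ρ ∈ S ∖ ρ₀} b_ρ ρ`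
lies in `σ`. By primitivity `P ∖ ρ₀` lies in some cone `τ`, and `τ ∩ σ` is a face of `τ`;
a face of a cone contains every summand of a sum of elements of the cone lying in the face,
so `P ∖ ρ₀ ⊆ σ`. Together with `ρ₀ ∈ S ⊆ σ` this puts `P` in a single cone, which is absurd.
-/

section Cones

variable {n : ℕ}

lemma add_mem_coneGen {G : Set (V n)} {x y : V n}
    (hx : x ∈ coneGen G) (hy : y ∈ coneGen G) : x + y ∈ coneGen G := by
  classical
  obtain ⟨t₁, c₁, ht₁, hc₁, rfl⟩ := hx
  obtain ⟨t₂, c₂, ht₂, hc₂, rfl⟩ := hy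
  refine ⟨t₁ ∪ t₂, fun g => (if g ∈ t₁ then c₁ g else 0) + (if g ∈ t₂ then c₂ g else 0),
    ?_, fun g _ => ?_, ?_⟩
  · simpa using And.intro ht₁ ht₂
  · apply add_nonneg <;> split_ifs with h <;> first | exact le_rfl | exact hc₁ g h | exact hc₂ g h
  · simp only [add_smul, ite_smul, zero_smul, Finset.sum_add_distrib, Finset.sum_ite_mem,
      Finset.union_inter_cancel_left, Finset.union_inter_cancel_right]

lemma smul_mem_coneGen {G : Set (V n)} {x : V n} {c : ℝ}
    (hc : 0 ≤ c) (hx : x ∈ coneGen G) : c • x ∈ coneGen G := by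
  obtain ⟨t, c₁, ht, hc₁, rfl⟩ := hx
  exact ⟨t, fun g => c * c₁ g, ht, fun g hg => mul_nonneg hc (hc₁ g hg), by
    simp [Finset.smul_sum, smul_smul]⟩

def coneGenCone (G : Set (V n)) : PointedCone ℝ (V n) where
  carrier := coneGen G
  add_mem' := add_mem_coneGen
  zero_mem' := ⟨∅, 0, by simp, by simp, by simp⟩
  smul_mem' c _ hx := smul_mem_coneGen c.2 hx

lemma Fan.exists_pointedCone_eq {F : Fan n} {σ : Set (V n)} (hσ : σ ∈ F.cones) :
    ∃ C : PointedCone ℝ (V n), (C : Set (V n)) = σ := by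
  obtain ⟨⟨G, -, rfl⟩, -⟩ := F.poly σ hσ
  exact ⟨coneGenCone G, rfl⟩

lemma coneRays_subset {σ : Set (V n)} : coneRays σ ⊆ σ := by
  rintro v ⟨-, m, -, hray⟩
  have hv : v ∈ ray v := ⟨1, zero_le_one, (one_smul ℝ v).symm⟩
  rw [hray] at hv
  exact hv.1

lemma IsFaceOf.mem_of_sum_mem {τ σ : Set (V n)} (hface : IsFaceOf (τ ∩ σ) τ)
    {ι : Type*} {s : Finset ι} {f : ι → V n} (hf : ∀ i ∈ s, f i ∈ τ)
    (hsum : ∑ i ∈ s, f i ∈ τ ∩ σ) : ∀ i ∈ s, f i ∈ σ := by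
  obtain ⟨m, hm_nonneg, hface⟩ := hface
  rw [hface] at hsum
  have hm_zero : ∑ i ∈ s, m (f i) = 0 := by rw [← map_sum]; exact hsum.2
  intro i hi
  have hi' : f i ∈ τ ∩ {x | m x = 0} :=
    ⟨hf i hi, (Finset.sum_eq_zero_iff_of_nonneg fun j hj => hm_nonneg _ (hf j hj)).1 hm_zero i hi⟩
  rw [← hface] at hi'
  exact hi'.2

lemma Fan.subset_of_sum_mem {F : Fan n} {τ σ : Set (V n)} (hτ : τ ∈ F.cones)
    (hσ : σ ∈ F.cones) {Q : Finset (V n)} (hQτ : ↑Q ⊆ τ) (hQσ : ∑ ρ ∈ Q, ρ ∈ σ) :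
    ↑Q ⊆ σ := by
  obtain ⟨C, rfl⟩ := F.exists_pointedCone_eq hτ
  exact (F.inter_face _ hτ σ hσ).1.mem_of_sum_mem hQτ ⟨C.sum_mem fun ρ hρ => hQτ hρ, hQσ⟩

end Cones

section PrimitiveRelations

variable {n : ℕ} {F : Fan n} {P S : Finset (V n)} {b : V n → ℝ}

lemma sum_erase_eq_of_sum_eq {ρ₀ : V n} (hP : ρ₀ ∈ P) (hS : ρ₀ ∈ S)
    (hsum : ∑ ρ ∈ P, ρ = ∑ ρ ∈ S, b ρ • ρ) :
    ∑ ρ ∈ P.erase ρ₀, ρ = (b ρ₀ - 1) • ρ₀ + ∑ ρ ∈ S.erase ρ₀, b ρ • ρ := by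
  have hP' := Finset.add_sum_erase P (fun ρ => ρ) hP
  have hS' := Finset.add_sum_erase S (fun ρ => b ρ • ρ) hS
  rw [sub_smul, one_smul]
  linear_combination (norm := module) hP' - hS' + hsum

lemma IsPrimRel.coeff_lt_one (hP : IsPrimColl F P) (hrel : IsPrimRel F P S b) {ρ₀ : V n}
    (hρ₀P : ρ₀ ∈ P) (hρ₀S : ρ₀ ∈ S) : b ρ₀ < 1 := by
  classical
  obtain ⟨σ, ⟨hσ, -, -⟩, hSσ, -, hb, hsum⟩ := hrel
  obtain ⟨τ, hτ, hPτ⟩ := hP.2.2 (P.erase ρ₀) (Finset.erase_ssubset hρ₀P)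
  have hSσ_mem : ∀ ρ ∈ S, ρ ∈ σ := fun ρ hρ => coneRays_subset (hSσ hρ)
  by_contra! hge
  refine hP.2.1 σ hσ ?_
  obtain ⟨C, rfl⟩ := F.exists_pointedCone_eq hσ
  have hrest : ∑ ρ ∈ P.erase ρ₀, ρ ∈ C := by
    rw [sum_erase_eq_of_sum_eq hρ₀P hρ₀S hsum]
    refine C.add_mem (C.smul_mem (by linarith) (hSσ_mem ρ₀ hρ₀S)) (C.sum_mem fun ρ hρ => ?_)
    exact C.smul_mem (hb ρ (Finset.mem_of_mem_erase hρ)).le (hSσ_mem ρ (Finset.mem_of_mem_erase hρ))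
  rw [← Finset.insert_erase hρ₀P, Finset.coe_insert, Set.insert_subset_iff]
  exact ⟨hSσ_mem ρ₀ hρ₀S, F.subset_of_sum_mem hτ hσ hPτ hrest⟩

lemma primVec_pos_iff (hb : ∀ ρ ∈ S, 0 < b ρ) (hlt : ∀ ρ ∈ P ∩ S, b ρ < 1) (ρ : V n) :
    0 < primVec P S b ρ ↔ ρ ∈ P := by
  unfold primVec
  by_cases hρP : ρ ∈ P <;> by_cases hρS : ρ ∈ S <;> simp only [hρP, hρS, if_true, if_false]
  · simpa using hlt ρ (Finset.mem_inter.2 ⟨hρP, hρS⟩)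
  · simp
  · simpa using (hb ρ hρS).le
  · simp

end PrimitiveRelations

theorem primRel_coeff_lt_one_general {n : ℕ} (F : Fan n)
    (P S : Finset (V n)) (b : V n → ℝ)
    (hP : IsPrimColl F P) (hrel : IsPrimRel F P S b) :
    (∀ ρ ∈ P ∩ S, b ρ < 1) ∧
    {ρ : V n | 0 < primVec P S b ρ} = ↑P := by
  have hlt : ∀ ρ ∈ P ∩ S, b ρ < 1 := fun ρ hρ =>
    hrel.coeff_lt_one hP (Finset.mem_inter.1 hρ).1 (Finset.mem_inter.1 hρ).2
  obtain ⟨-, -, -, -, hb, -⟩ := hrel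
  exact ⟨hlt, Set.ext (primVec_pos_iff hb hlt)⟩

/-- In a primitive relation `ρ₁ + ⋯ + ρ_k = ∑_{ρ∈S} b_ρ ρ` for a primitive
collection `P`, the coefficients satisfy `b_ρ < 1` for `ρ ∈ P ∩ S`; consequently
the set of rays where the associated vector `a_P ∈ ℝ^{Σ(1)}` is strictly
positive is exactly `P`. -/
theorem primRel_coeff_lt_one {n : ℕ} (F : Fan n)
    (hconv : Convex ℝ F.support) (hdim : dimCone F.support = n)
    (P S : Finset (V n)) (b : V n → ℝ)
    (hP : IsPrimColl F P) (hrel : IsPrimRel F P S b) :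
    (∀ ρ ∈ P ∩ S, b ρ < 1) ∧
    {ρ : V n | 0 < primVec P S b ρ} = ↑P :=
  primRel_coeff_lt_one_general F P S b hP hrel
end
end

section
/- Let Σ be a fan in ℝ^n with convex support of dimension n, let P = {ρ_1,…,ρ_k} be a primitive collection for Σ, and let a_P ∈ ℝ^{Σ(1)} be the vector associated to any choice of primitive relation ρ_1 + ⋯ + ρ_k = Σ_{ρ∈S} b_ρ ρ for P (with (a_P)_ρ = 1 for ρ ∈ P∖S, 1 − b_ρ for ρ ∈ P∩S, −b_ρ for ρ ∈ S∖P, and 0 otherwise). Then: (1) for every φ ∈ PL(Σ), Σ_{ρ∈Σ(1)} (a_P)_ρ φ(ρ) = φ(ρ_1) + ⋯ + φ(ρ_k) − φ(ρ_1 + ⋯ + ρ_k); in particular the induced functional l_P ∈ PL(Σ)* is independent of the choice of S; and (2) l_P(φ) ≥ 0 for every convex φ ∈ CPL(Σ). -/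
open Set

noncomputable section

/-- For a primitive collection `P` with a primitive relation giving the vector
`a_P ∈ ℝ^{Σ(1)}`: (1) for every `φ ∈ PL(Σ)` one has
`∑_{ρ∈Σ(1)} (a_P)_ρ φ(ρ) = φ(ρ₁) + ⋯ + φ(ρ_k) − φ(ρ₁ + ⋯ + ρ_k)`; in
particular the induced functional `l_P` does not depend on the choice of the
primitive relation; and (2) `l_P(φ) ≥ 0` for every convex `φ ∈ CPL(Σ)`. -/
theorem primRel_functional {n : ℕ} (F : Fan n)
    (hconv : Convex ℝ F.support) (hdim : dimCone F.support = n)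
    (P S : Finset (V n)) (b : V n → ℝ)
    (hP : IsPrimColl F P) (hrel : IsPrimRel F P S b) :
    (∀ φ : V n → ℝ, IsPL F φ →
      ∑ᶠ ρ ∈ F.rayGens, primVec P S b ρ * φ ρ
        = (∑ ρ ∈ P, φ ρ) - φ (∑ ρ ∈ P, ρ)) ∧
    (∀ φ : V n → ℝ, IsPL F φ → IsConvexPLF F φ →
      0 ≤ (∑ ρ ∈ P, φ ρ) - φ (∑ ρ ∈ P, ρ)) := by
  classical
  obtain ⟨σ, ⟨hσF, hsumσ, hmin⟩, hSσ, hSli, hbpos, hrelEq⟩ := hrel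
  -- rays of σ are in σ
  have hconeRaySub : ∀ {τ : Set (V n)}, ∀ v ∈ coneRays τ, v ∈ τ := by
    rintro τ v ⟨hprim, m, hm, hface⟩
    have : v ∈ ray v := ⟨1, zero_le_one, (one_smul _ _).symm⟩
    rw [hface] at this; exact this.1
  -- S ⊆ rayGens
  have hSray : ∀ v ∈ S, v ∈ F.rayGens := by
    intro v hv
    obtain ⟨hprim, hface⟩ := hSσ hv
    exact ⟨hprim, F.face_mem σ hσF _ hface⟩
  have hPray : ∀ v ∈ P, v ∈ F.rayGens := fun v hv => hP.1 hv
  -- every element of rayGens is in support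
  have hmemSupp : ∀ v ∈ F.rayGens, v ∈ F.support := by
    rintro v ⟨hprim, hray⟩
    exact Set.mem_biUnion hray ⟨1, zero_le_one, (one_smul _ _).symm⟩
  -- 0 ∈ every cone
  have hzero : ∀ τ ∈ F.cones, (0 : V n) ∈ τ := by
    intro τ hτ
    obtain ⟨⟨G, hG, hGen⟩, _⟩ := F.poly τ hτ
    rw [hGen]
    exact ⟨∅, 0, by simp, by simp, by simp⟩
  -- support closed under addition
  have hadd : ∀ u ∈ F.support, ∀ v ∈ F.support, u + v ∈ F.support := by
    intro u hu v hv
    have hmid : (1/2 : ℝ) • u + (1/2 : ℝ) • v ∈ F.support :=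
      hconv hu hv (by norm_num) (by norm_num) (by norm_num)
    obtain ⟨τ, hτ, hmidτ⟩ := Set.mem_iUnion₂.1 hmid
    obtain ⟨⟨G, hG, hGen⟩, _⟩ := F.poly τ hτ
    have h2 : (2 : ℝ) • ((1/2 : ℝ) • u + (1/2 : ℝ) • v) ∈ τ := by
      rw [hGen] at hmidτ ⊢
      obtain ⟨t, c, htG, hc, hx⟩ := hmidτ
      refine ⟨t, (2 : ℝ) • c, htG, fun g hg => by simp only [Pi.smul_apply, smul_eq_mul]; linarith [hc g hg], ?_⟩
      · rw [hx, Finset.smul_sum]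
        simp [smul_smul]
    have heq : (2 : ℝ) • ((1/2 : ℝ) • u + (1/2 : ℝ) • v) = u + v := by
      rw [smul_add, smul_smul, smul_smul]; norm_num
    rw [heq] at h2
    exact Set.mem_biUnion hτ h2
  -- key: φ (∑ ρ ∈ P, ρ) = ∑ ρ ∈ S, b ρ * φ ρ for PL φ
  have hkey : ∀ φ : V n → ℝ, IsPL F φ →
      φ (∑ ρ ∈ P, ρ) = ∑ ρ ∈ S, b ρ * φ ρ := by
    intro φ hφ
    obtain ⟨m, hm⟩ := hφ σ hσF
    have hSin : ∀ ρ ∈ S, ρ ∈ σ := fun ρ hρ => hconeRaySub _ (hSσ hρ)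
    rw [hm _ hsumσ, hrelEq, map_sum]
    refine Finset.sum_congr rfl fun ρ hρ => ?_
    rw [map_smul, smul_eq_mul, hm _ (hSin ρ hρ)]
  constructor
  · intro φ hφ
    have hsupp : F.rayGens ∩ Function.support (fun ρ => primVec P S b ρ * φ ρ)
        = ↑(P ∪ S) ∩ Function.support (fun ρ => primVec P S b ρ * φ ρ) := by
      ext ρ
      simp only [Set.mem_inter_iff, Function.mem_support, Finset.coe_union,
        Set.mem_union, Finset.mem_coe]
      constructor
      · rintro ⟨hρ, hne⟩
        refine ⟨?_, hne⟩
        by_contra h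
        push_neg at h
        simp [primVec, h.1, h.2] at hne
      · rintro ⟨hρ, hne⟩
        refine ⟨?_, hne⟩
        rcases hρ with h | h
        · exact hPray _ h
        · exact hSray _ h
    rw [finsum_mem_eq_sum_of_inter_support_eq _ hsupp]
    have hsplit : ∀ ρ : V n, primVec P S b ρ * φ ρ =
        (if ρ ∈ P then φ ρ else 0) - (if ρ ∈ S then b ρ * φ ρ else 0) := by
      intro ρ
      by_cases h1 : ρ ∈ P <;> by_cases h2 : ρ ∈ S <;>
        simp [primVec, h1, h2] <;> ring
    rw [Finset.sum_congr rfl (fun ρ _ => hsplit ρ), Finset.sum_sub_distrib]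
    rw [Finset.sum_ite_mem, Finset.sum_ite_mem,
      Finset.union_inter_cancel_left, Finset.union_inter_cancel_right,
      hkey φ hφ]
  · intro φ hφ hcv
    have hφ0 : φ 0 = 0 := by
      obtain ⟨m, hm⟩ := hφ σ hσF
      rw [hm _ (hzero σ hσF), map_zero]
    have main : ∀ Q : Finset (V n), (∀ v ∈ Q, v ∈ F.support) →
        (∑ ρ ∈ Q, ρ) ∈ F.support ∧ φ (∑ ρ ∈ Q, ρ) ≤ ∑ ρ ∈ Q, φ ρ := by
      intro Q
      induction Q using Finset.induction with
      | empty =>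
        intro _
        simp only [Finset.sum_empty]
        exact ⟨Set.mem_biUnion hσF (hzero σ hσF), by rw [hφ0]⟩
      | @insert a s hx ih =>
        intro hQ
        have hs := ih (fun v hv => hQ v (Finset.mem_insert_of_mem hv))
        have ha := hQ a (Finset.mem_insert_self a s)
        rw [Finset.sum_insert hx, Finset.sum_insert hx]
        refine ⟨hadd _ ha _ hs.1, ?_⟩
        calc φ (a + ∑ ρ ∈ s, ρ) ≤ φ a + φ (∑ ρ ∈ s, ρ) := hcv _ ha _ hs.1
          _ ≤ φ a + ∑ ρ ∈ s, φ ρ := by linarith [hs.2]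
    have := (main P (fun v hv => hmemSupp v (hPray v hv))).2
    linarith
end
end

section
/- Let Σ be a fan in ℝ^n with convex support of dimension n. If P is a primitive collection for Σ, then every proper subset Q of P is a linearly independent set of vectors in ℝ^n. -/
open Set

noncomputable section

lemma mem_coneGen_iff {n : ℕ} (G : Finset (V n)) (x : V n) :
    x ∈ coneGen (↑G : Set (V n)) ↔
      ∃ c : V n → ℝ, (∀ g ∈ G, 0 ≤ c g) ∧ x = ∑ g ∈ G, c g • g := by
  classical
  constructor
  · rintro ⟨t, c, hte, hc, rfl⟩
    have htG : t ⊆ G := Finset.coe_subset.mp hte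
    refine ⟨fun g => if g ∈ t then c g else 0, ?_, ?_⟩
    · intro g _
      dsimp only
      split_ifs with h
      · exact hc g h
      · exact le_refl 0
    · rw [← Finset.sum_subset htG (fun g _ hg => by simp [hg])]
      exact Finset.sum_congr rfl fun g hg => by simp [hg]
  · rintro ⟨c, hc, rfl⟩
    exact ⟨G, c, subset_rfl, hc, rfl⟩

lemma coneGen_sum_mem {n : ℕ} (G : Finset (V n)) (A : Finset (V n)) (a : V n → ℝ)
    (hA : ∀ v ∈ A, v ∈ coneGen (↑G : Set (V n))) (ha : ∀ v ∈ A, 0 ≤ a v) :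
    (∑ v ∈ A, a v • v) ∈ coneGen (↑G : Set (V n)) := by
  classical
  have hch : ∀ v : V n, ∃ c : V n → ℝ,
      v ∈ A → ((∀ g ∈ G, 0 ≤ c g) ∧ v = ∑ g ∈ G, c g • g) := by
    intro v
    by_cases hv : v ∈ A
    · obtain ⟨c, h1, h2⟩ := (mem_coneGen_iff G v).mp (hA v hv)
      exact ⟨c, fun _ => ⟨h1, h2⟩⟩
    · exact ⟨0, fun h => absurd h hv⟩
  choose c hc using hch
  rw [mem_coneGen_iff]
  refine ⟨fun g => ∑ v ∈ A, a v * c v g, ?_, ?_⟩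
  · intro g hg
    exact Finset.sum_nonneg fun v hv => mul_nonneg (ha v hv) ((hc v hv).1 g hg)
  · calc ∑ v ∈ A, a v • v = ∑ v ∈ A, ∑ g ∈ G, (a v * c v g) • g := by
          refine Finset.sum_congr rfl fun v hv => ?_
          nth_rewrite 2 [(hc v hv).2]
          rw [Finset.smul_sum]
          exact Finset.sum_congr rfl fun g _ => smul_smul _ _ _
      _ = ∑ g ∈ G, (∑ v ∈ A, a v * c v g) • g := by
          rw [Finset.sum_comm]
          exact Finset.sum_congr rfl fun g _ => (Finset.sum_smul).symm

lemma fan_sum_mem {n : ℕ} (F : Fan n) {σ : Set (V n)} (hσ : σ ∈ F.cones)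
    (A : Finset (V n)) (a : V n → ℝ)
    (hA : ∀ v ∈ A, v ∈ σ) (ha : ∀ v ∈ A, 0 ≤ a v) :
    (∑ v ∈ A, a v • v) ∈ σ := by
  obtain ⟨G, -, hG⟩ := (F.poly σ hσ).1
  rw [hG] at hA ⊢
  exact coneGen_sum_mem G A a hA ha

lemma primColl_aux {n : ℕ} (F : Fan n) (P : Finset (V n)) (hP : IsPrimColl F P)
    (A B : Finset (V n)) (hAP : A ⊂ P) (hBP : B ⊂ P) (hAB : Disjoint A B)
    (hA : A.Nonempty) (a : V n → ℝ)
    (hapos : ∀ v ∈ A, 0 < a v) (hbpos : ∀ v ∈ B, 0 < a v)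
    (hrel : ∑ v ∈ A, a v • v = ∑ v ∈ B, a v • v) : False := by
  classical
  by_cases hB : B.Nonempty
  · -- face argument
    have hPA : P \ A ⊂ P := Finset.sdiff_ssubset hAP.subset hA
    have hPB : P \ B ⊂ P := Finset.sdiff_ssubset hBP.subset hB
    obtain ⟨σA, hσA, hPAs⟩ := hP.2.2 _ hPA
    obtain ⟨σB, hσB, hPBs⟩ := hP.2.2 _ hPB
    have hBsubA : ∀ v ∈ B, v ∈ σA := by
      intro v hv
      exact hPAs (Finset.mem_coe.mpr (Finset.mem_sdiff.mpr
        ⟨hBP.subset hv, fun hvA => (Finset.disjoint_left.mp hAB hvA) hv⟩))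
    have hAsubB : ∀ v ∈ A, v ∈ σB := by
      intro v hv
      exact hPBs (Finset.mem_coe.mpr (Finset.mem_sdiff.mpr
        ⟨hAP.subset hv, fun hvB => (Finset.disjoint_left.mp hAB hv) hvB⟩))
    have hxA : (∑ v ∈ B, a v • v) ∈ σA :=
      fan_sum_mem F hσA B a hBsubA (fun v hv => (hbpos v hv).le)
    have hxB : (∑ v ∈ B, a v • v) ∈ σB := by
      rw [← hrel]
      exact fan_sum_mem F hσB A a hAsubB (fun v hv => (hapos v hv).le)
    obtain ⟨⟨m, hm, hmeq⟩, ⟨m', hm', hm'eq⟩⟩ := F.inter_face σA hσA σB hσB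
    have hmx : m (∑ v ∈ B, a v • v) = 0 := by
      have hxτ : (∑ v ∈ B, a v • v) ∈ σA ∩ σB := ⟨hxA, hxB⟩
      rw [hmeq] at hxτ; exact hxτ.2
    have hm'x : m' (∑ v ∈ A, a v • v) = 0 := by
      have hxτ' : (∑ v ∈ B, a v • v) ∈ σA ∩ σB := ⟨hxA, hxB⟩
      rw [hm'eq] at hxτ'
      rw [hrel]
      exact hxτ'.2
    have hBzero : ∀ v ∈ B, m v = 0 := by
      have hsum : ∑ v ∈ B, a v * m v = 0 := by
        rw [← hmx, map_sum]
        exact Finset.sum_congr rfl fun v _ => by rw [map_smul, smul_eq_mul]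
      intro v hv
      have h0 := (Finset.sum_eq_zero_iff_of_nonneg
        (fun w hw => mul_nonneg (hbpos w hw).le (hm w (hBsubA w hw)))).mp hsum v hv
      rcases mul_eq_zero.mp h0 with h | h
      · exact absurd h (hbpos v hv).ne'
      · exact h
    have hAzero : ∀ v ∈ A, m' v = 0 := by
      have hsum : ∑ v ∈ A, a v * m' v = 0 := by
        rw [← hm'x, map_sum]
        exact Finset.sum_congr rfl fun v _ => by rw [map_smul, smul_eq_mul]
      intro v hv
      have h0 := (Finset.sum_eq_zero_iff_of_nonneg
        (fun w hw => mul_nonneg (hapos w hw).le (hm' w (hAsubB w hw)))).mp hsum v hv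
      rcases mul_eq_zero.mp h0 with h | h
      · exact absurd h (hapos v hv).ne'
      · exact h
    have hτ : σA ∩ σB ∈ F.cones := F.face_mem σA hσA _ ⟨m, hm, hmeq⟩
    refine hP.2.1 _ hτ ?_
    intro v hv
    have hvP : v ∈ P := Finset.mem_coe.mp hv
    by_cases hvA : v ∈ A
    · rw [hm'eq]
      exact ⟨hAsubB v hvA, hAzero v hvA⟩
    · by_cases hvB : v ∈ B
      · rw [hmeq]
        exact ⟨hBsubA v hvB, hBzero v hvB⟩
      · exact ⟨hPAs (Finset.mem_coe.mpr (Finset.mem_sdiff.mpr ⟨hvP, hvA⟩)),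
          hPBs (Finset.mem_coe.mpr (Finset.mem_sdiff.mpr ⟨hvP, hvB⟩))⟩
  · -- B is empty: positive relation to zero, contradicts strong convexity
    rw [Finset.not_nonempty_iff_eq_empty] at hB
    subst hB
    rw [Finset.sum_empty] at hrel
    obtain ⟨σ, hσ, hAs⟩ := hP.2.2 A hAP
    obtain ⟨w, hw⟩ := hA
    have hmem : ∀ v ∈ A, v ∈ σ := fun v hv => hAs (Finset.mem_coe.mpr hv)
    have h1 : a w • w ∈ σ := by
      have := fan_sum_mem F hσ {w} a (fun v hv => by
        rw [Finset.mem_singleton] at hv; exact hv ▸ hmem w hw)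
        (fun v hv => by rw [Finset.mem_singleton] at hv; exact hv ▸ (hapos w hw).le)
      simpa using this
    have h2 : -(a w • w) ∈ σ := by
      have hsplit : a w • w + ∑ v ∈ A.erase w, a v • v = 0 := by
        rw [Finset.add_sum_erase A (fun v => a v • v) hw]; exact hrel
      have heq : ∑ v ∈ A.erase w, a v • v = -(a w • w) :=
        eq_neg_of_add_eq_zero_right hsplit
      rw [← heq]
      exact fan_sum_mem F hσ _ a (fun v hv => hmem v (Finset.mem_of_mem_erase hv))
        (fun v hv => (hapos v (Finset.mem_of_mem_erase hv)).le)
    have hzero : a w • w = 0 := (F.poly σ hσ).2 _ h1 h2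
    have hw0 : w = 0 := by
      rcases smul_eq_zero.mp hzero with h | h
      · exact absurd h (hapos w hw).ne'
      · exact h
    have hprim := (hP.1 (Finset.mem_coe.mpr (hAP.subset hw))).1
    exact hprim.2.1 hw0

/-- Every proper subset of a primitive collection is linearly independent. -/
theorem primColl_proper_subset_linearIndependent {n : ℕ} (F : Fan n)
    (hconv : Convex ℝ F.support) (hdim : dimCone F.support = n)
    (P : Finset (V n)) (hP : IsPrimColl F P)
    (Q : Finset (V n)) (hQ : Q ⊂ P) :
    LinearIndependent ℝ (fun q : {x // x ∈ Q} => (q : V n)) := by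
  classical
  by_contra h
  rw [Fintype.linearIndependent_iff] at h
  push_neg at h
  obtain ⟨c, hsum0, i, hi⟩ := h
  set cc : V n → ℝ := fun v => if h : v ∈ Q then c ⟨v, h⟩ else 0 with hccdef
  have hQsum : ∑ v ∈ Q, cc v • v = 0 := by
    rw [Finset.univ_eq_attach] at hsum0
    rw [← Finset.sum_attach Q (fun v => cc v • v), ← hsum0]
    refine Finset.sum_congr rfl fun j _ => ?_
    simp [hccdef]
  set A : Finset (V n) := Q.filter (fun v => 0 < cc v) with hAdef
  set B : Finset (V n) := Q.filter (fun v => cc v < 0) with hBdef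
  have hAB : Disjoint A B := by
    rw [Finset.disjoint_left]
    intro v hvA hvB
    rw [hAdef, Finset.mem_filter] at hvA
    rw [hBdef, Finset.mem_filter] at hvB
    exact absurd hvA.2 (not_lt.mpr hvB.2.le)
  have hsplit : ∑ v ∈ A, cc v • v + ∑ v ∈ B, cc v • v = 0 := by
    have h1 : ∑ v ∈ Q, cc v • v
        = ∑ v ∈ A, cc v • v + ∑ v ∈ Q.filter (fun v => ¬ 0 < cc v), cc v • v :=
      (Finset.sum_filter_add_sum_filter_not Q _ _).symm
    have hBsub : B ⊆ Q.filter (fun v => ¬ 0 < cc v) := by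
      intro v hv
      rw [hBdef, Finset.mem_filter] at hv
      exact Finset.mem_filter.mpr ⟨hv.1, not_lt.mpr hv.2.le⟩
    have h2 : ∑ v ∈ Q.filter (fun v => ¬ 0 < cc v), cc v • v = ∑ v ∈ B, cc v • v := by
      refine (Finset.sum_subset hBsub ?_).symm
      intro v hv hvB
      rw [Finset.mem_filter] at hv
      rw [hBdef, Finset.mem_filter] at hvB
      have : cc v = 0 := le_antisymm (not_lt.mp hv.2)
        (not_lt.mp (fun hc => hvB ⟨hv.1, hc⟩))
      simp [this]
    rw [h1, h2] at hQsum
    exact hQsum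
  have hrel : ∑ v ∈ A, |cc v| • v = ∑ v ∈ B, |cc v| • v := by
    have hA' : ∑ v ∈ A, |cc v| • v = ∑ v ∈ A, cc v • v := by
      refine Finset.sum_congr rfl fun v hv => ?_
      rw [hAdef, Finset.mem_filter] at hv
      rw [abs_of_pos hv.2]
    have hB' : ∑ v ∈ B, |cc v| • v = ∑ v ∈ B, (-cc v) • v := by
      refine Finset.sum_congr rfl fun v hv => ?_
      rw [hBdef, Finset.mem_filter] at hv
      rw [abs_of_neg hv.2]
    rw [hA', hB']
    have : ∑ v ∈ B, (-cc v) • v = -∑ v ∈ B, cc v • v := by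
      rw [← Finset.sum_neg_distrib]
      exact Finset.sum_congr rfl fun v _ => (neg_smul _ _)
    rw [this]
    exact eq_neg_of_add_eq_zero_left hsplit
  have hAP : A ⊂ P := lt_of_le_of_lt (Finset.filter_subset _ _) hQ
  have hBP : B ⊂ P := lt_of_le_of_lt (Finset.filter_subset _ _) hQ
  have hapos : ∀ v ∈ A, 0 < |cc v| := fun v hv =>
    abs_pos.mpr (Finset.mem_filter.mp hv).2.ne'
  have hbpos : ∀ v ∈ B, 0 < |cc v| := fun v hv =>
    abs_pos.mpr (Finset.mem_filter.mp hv).2.ne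
  have hcci : cc (i : V n) ≠ 0 := by
    have : cc (i : V n) = c i := by simp [hccdef]
    rw [this]; exact hi
  rcases lt_or_gt_of_ne hcci with hlt | hgt
  · have hiB : (i : V n) ∈ B := Finset.mem_filter.mpr ⟨i.2, hlt⟩
    exact primColl_aux F P hP B A hBP hAP hAB.symm ⟨_, hiB⟩ _ hbpos hapos hrel.symm
  · have hiA : (i : V n) ∈ A := Finset.mem_filter.mpr ⟨i.2, hgt⟩
    exact primColl_aux F P hP A B hAP hBP hAB ⟨_, hiA⟩ _ hapos hbpos hrel
end
end

section
/- Let Σ be a fan in ℝ^n with convex support of dimension n. Then every primitive collection for Σ has at most n+1 elements. -/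
open Set

noncomputable section

/-- A face of a cone is a subset of the cone. -/
lemma face_subset' {n : ℕ} {τ σ : Set (V n)} (h : IsFaceOf τ σ) : τ ⊆ σ := by
  obtain ⟨m, _, rfl⟩ := h; exact Set.inter_subset_left

/-- Any cone in `ℝ^n` has dimension at most `n`. -/
lemma dimCone_le {n : ℕ} (σ : Set (V n)) : dimCone σ ≤ n := by
  have h := Submodule.finrank_le (Submodule.span ℝ σ)
  simpa [dimCone, Module.finrank_fin_fun] using h

/-- A cone containing a nonzero vector has positive dimension. -/
lemma one_le_dimCone {n : ℕ} {σ : Set (V n)} {v : V n} (hv : v ∈ σ) (hv0 : v ≠ 0) :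
    1 ≤ dimCone σ := by
  have hle : (Submodule.span ℝ ({v} : Set (V n))) ≤ Submodule.span ℝ σ :=
    Submodule.span_mono (by simpa using hv)
  have h1 : Module.finrank ℝ (Submodule.span ℝ ({v} : Set (V n))) = 1 :=
    finrank_span_singleton hv0
  calc 1 = Module.finrank ℝ (Submodule.span ℝ ({v} : Set (V n))) := h1.symm
    _ ≤ dimCone σ := Submodule.finrank_mono hle

/-- A proper face has strictly smaller dimension. -/
lemma face_dim_lt {n : ℕ} {τ σ : Set (V n)} (h : IsFaceOf τ σ) (hne : τ ≠ σ) :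
    dimCone τ < dimCone σ := by
  obtain ⟨m, hm, hτ⟩ := h
  have hsub : τ ⊆ σ := hτ ▸ Set.inter_subset_left
  have hle : Submodule.span ℝ τ ≤ Submodule.span ℝ σ := Submodule.span_mono hsub
  refine lt_of_le_of_ne (Submodule.finrank_mono hle) ?_
  intro heq
  have hspan : Submodule.span ℝ τ = Submodule.span ℝ σ :=
    Submodule.eq_of_le_of_finrank_le hle heq.ge
  have hker : Submodule.span ℝ σ ≤ LinearMap.ker m := by
    rw [← hspan]
    refine Submodule.span_le.mpr ?_
    intro x hx
    have hx' : x ∈ σ ∩ {x | m x = 0} := hτ ▸ hx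
    exact hx'.2
  apply hne
  rw [hτ]
  ext x
  constructor
  · exact fun hx => hx.1
  · exact fun hx => ⟨hx, hker (Submodule.subset_span hx)⟩

/-- The intersection of two cones of a fan belongs to the fan. -/
lemma inter_mem_cones {n : ℕ} (F : Fan n) {σ σ' : Set (V n)}
    (hσ : σ ∈ F.cones) (hσ' : σ' ∈ F.cones) : σ ∩ σ' ∈ F.cones :=
  F.face_mem σ hσ _ (F.inter_face σ hσ σ' hσ').1

/-- Every primitive collection for a fan in `ℝ^n` with convex support of
dimension `n` has at most `n + 1` elements. -/
theorem primColl_card_le {n : ℕ} (F : Fan n)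
    (hconv : Convex ℝ F.support) (hdim : dimCone F.support = n)
    (P : Finset (V n)) (hP : IsPrimColl F P) :
    P.card ≤ n + 1 := by
  obtain ⟨hPrays, hnotin, hsub⟩ := hP
  -- key induction: any `Q ⊆ P` with `P.card = Q.card + m`, `1 ≤ m`, lies in a cone
  -- of dimension at most `n + 1 - m`.
  have key : ∀ m : ℕ, 1 ≤ m → ∀ Q : Finset (V n), Q ⊆ P → Q.card + m = P.card →
      ∃ σ ∈ F.cones, ↑Q ⊆ σ ∧ dimCone σ + m ≤ n + 1 := by
    intro m
    induction m with
    | zero => omega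
    | succ m ih =>
      intro _ Q hQP hcard
      rcases Nat.eq_zero_or_pos m with hm | hm
      · -- base case : `m + 1 = 1`, `Q` is a proper subset of `P`
        subst hm
        have hne : Q ≠ P := by
          intro h; rw [h] at hcard; omega
        obtain ⟨σ, hσ, hQσ⟩ := hsub Q (HasSubset.Subset.ssubset_of_ne hQP hne)
        exact ⟨σ, hσ, hQσ, by have := dimCone_le σ; omega⟩
      · -- inductive step
        have hlt : Q.card < P.card := by omega
        obtain ⟨v, hvP, hvQ⟩ := Finset.exists_of_ssubset
          (HasSubset.Subset.ssubset_of_ne hQP (fun h => by rw [h] at hcard; omega))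
        -- apply the inductive hypothesis to `insert v Q`
        have hins : (insert v Q).card + m = P.card := by
          rw [Finset.card_insert_of_notMem hvQ]; omega
        obtain ⟨τ, hτ, hQτ, hdτ⟩ := ih hm (insert v Q) (Finset.insert_subset hvP hQP) hins
        -- a cone containing `P.erase v`
        obtain ⟨σ, hσ, hPeσ⟩ := hsub (P.erase v) (Finset.erase_ssubset hvP)
        have hvσ : v ∉ σ := by
          intro hvσ
          apply hnotin σ hσ
          intro x hx
          rcases eq_or_ne x v with rfl | hxv
          · exact hvσ
          · exact hPeσ (by
              simp only [Finset.coe_erase, Set.mem_diff, Set.mem_singleton_iff]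
              exact ⟨hx, hxv⟩)
        -- intersect
        refine ⟨τ ∩ σ, inter_mem_cones F hτ hσ, ?_, ?_⟩
        · intro x hx
          refine ⟨hQτ (by simp [hx]), hPeσ ?_⟩
          simp only [Finset.coe_erase, Set.mem_diff, Set.mem_singleton_iff]
          exact ⟨hQP hx, fun h => hvQ (h ▸ hx)⟩
        · have hface : IsFaceOf (τ ∩ σ) τ := (F.inter_face τ hτ σ hσ).1
          have hneq : τ ∩ σ ≠ τ := by
            intro h
            have hvτ : v ∈ τ := hQτ (by simp)
            have : v ∈ τ ∩ σ := by rw [h]; exact hvτ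
            exact hvσ this.2
          have := face_dim_lt hface hneq
          omega
  -- conclude
  rcases Nat.lt_or_ge P.card 2 with h2 | h2
  · omega
  · obtain ⟨v, hvP⟩ := Finset.card_pos.mp (by omega : 0 < P.card)
    have hv0 : v ≠ 0 := (hPrays hvP).1.2.1
    obtain ⟨σ, hσ, hvσ, hdσ⟩ := key (P.card - 1) (by omega) {v}
      (Finset.singleton_subset_iff.mpr hvP) (by simp; omega)
    have h1 : 1 ≤ dimCone σ := one_le_dimCone (hvσ (by simp)) hv0
    omega
end
end

section
/- Let Σ be a fan in ℝ^n with convex support of dimension n, let Σ' be a refinement of Σ with Σ'(1) = Σ(1), and let P be a primitive collection for Σ' of Type B, i.e., P is not contained in σ(1) for any cone σ ∈ Σ. Then P is a primitive collection for Σ. -/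
open Set

noncomputable section

/-- **Type B primitive collections descend.** Let `Σ'` be a refinement of `Σ`
with `Σ'(1) = Σ(1)` and let `P` be a primitive collection for `Σ'` of Type B,
i.e. `P ⊄ σ(1)` for every `σ ∈ Σ`.  Then `P` is a primitive collection for `Σ`. -/
theorem typeB_primColl_descends {n : ℕ} (F F' : Fan n)
    (hconv : Convex ℝ F.support) (hdim : dimCone F.support = n)
    (href : F'.Refines F) (hray : F'.rayGens = F.rayGens)
    (P : Finset (V n)) (hP : IsPrimColl F' P)
    (hB : ∀ σ ∈ F.cones, ¬ (↑P ⊆ coneRays σ)) :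
    IsPrimColl F P := by
  obtain ⟨hP1, hP2, hP3⟩ := hP
  rw [hray] at hP1
  refine ⟨hP1, ?_, ?_⟩
  · intro σ hσ hPσ
    apply hB σ hσ
    intro v hv
    have hvP : v ∈ P := hv
    have hvgen : v ∈ F.rayGens := hP1 hv
    have hprim : IsPrimitiveVec v := hvgen.1
    have hraymem : ray v ∈ F.cones := hvgen.2
    refine ⟨hprim, ?_⟩
    -- ray v ⊆ σ since σ is a cone (closed under nonneg scaling)
    have hsub : ray v ⊆ σ := by
      obtain ⟨⟨G, _, hGeq⟩, _⟩ := F.poly σ hσ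
      intro x hx
      obtain ⟨t, ht0, htx⟩ := hx
      have hvσ : v ∈ σ := hPσ hvP
      rw [hGeq] at hvσ ⊢
      obtain ⟨s, c, hsG, hc0, hveq⟩ := hvσ
      refine ⟨s, fun g => t * c g, hsG, fun g hg => mul_nonneg ht0 (hc0 g hg), ?_⟩
      rw [htx, hveq, Finset.smul_sum]
      simp [mul_smul]
    have := (F.inter_face (ray v) hraymem σ hσ).2
    rwa [Set.inter_eq_left.mpr hsub] at this
  · intro Q hQ
    obtain ⟨σ', hσ', hQσ'⟩ := hP3 Q hQ
    obtain ⟨σ, hσ, hss⟩ := href.2 σ' hσ'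
    exact ⟨σ, hσ, hQσ'.trans hss⟩
end
end
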